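/- arXiv:1308.3651 — 2 statements merged into one kernel-verified Lean document; each statement's English description precedes it below -/
import Mathlib

section
/- Let I be a prime ideal of the Gaussian integers ℤ[i] such that the quotient ring ℤ[i]/I has characteristic different from 2. If A ∈ SL₂(ℤ[i]) has finite order and every entry of A − 1 (where 1 is the identity matrix) lies in I, then A = 1. -/
/-!
Write `I = (π)` (the case `I = 0` is trivial) and replace `A` by a power of prime order `q`.
If `A = 1 + π ^ k N`, expanding `A ^ q = 1` by the binomial theorem shows that the linear term
`q π ^ k N` is divisible by `π ^ (k + e + 1)`, where `π ^ e` exactly divides `q`, as long as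
`e < q - 1`; hence `π` divides `N`. So `A - 1` is divisible by every power of `π`, i.e. `A = 1`.
In `ℤ[i]` only `2` ramifies, so `e ≤ 1`, and `e = 1` forces `q` to be the characteristic of
`ℤ[i]/(π)`, which is odd.
-/

open Matrix MatrixGroups

theorem pow_add_succ_dvd_choose_mul_pow {R : Type*} [CommSemiring R] {π : R} {q e k m : ℕ}
    (hq : q.Prime) (hqe : π ^ e ∣ (q : R)) (he : e + 2 ≤ q) (hk : 1 ≤ k) (hm : 2 ≤ m)
    (hmq : m ≤ q) : π ^ (k + e + 1) ∣ (q.choose m : R) * π ^ (k * m) := by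
  rcases hmq.lt_or_eq with hmq | rfl
  · have hchoose : π ^ e ∣ (q.choose m : R) :=
      hqe.trans (Nat.cast_dvd_cast (hq.dvd_choose_self (by omega) hmq))
    rw [show k + e + 1 = e + (k + 1) by ring, pow_add]
    exact mul_dvd_mul hchoose (pow_dvd_pow π (by nlinarith))
  · exact (pow_dvd_pow π (by nlinarith)).mul_left _

namespace Matrix

variable {R n : Type*} [CommRing R] [IsDomain R] [Fintype n] [DecidableEq n] {π : R}

theorem prime_dvd_of_smul_add_one_pow_eq_one (hπ : Prime π) {q e k : ℕ} {u : R}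
    (hq : q.Prime) (hqu : (q : R) = π ^ e * u) (hu : ¬π ∣ u) (he : e + 2 ≤ q) (hk : 1 ≤ k)
    {N : Matrix n n R} (hN : (π ^ k • N + 1) ^ q = 1) (i j : n) : π ∣ N i j := by
  set a : ℕ → R := fun m ↦ (q.choose m : R) * π ^ (k * m) * (N ^ m) i j
  have hsum : ∑ m ∈ Finset.range (q + 1), a m = (1 : Matrix n n R) i j := by
    rw [← hN, (Commute.one_right _).add_pow, sum_apply]
    refine Finset.sum_congr rfl fun m _ ↦ ?_
    rw [one_pow, mul_one, ← Nat.cast_comm, ← nsmul_eq_mul, smul_pow, ← pow_mul]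
    simp [a, nsmul_eq_mul, mul_assoc]
  have h0 : 0 ∈ Finset.range (q + 1) := by simp
  have h1 : 1 ∈ (Finset.range (q + 1)).erase 0 := by simp [hq.pos]
  rw [← Finset.add_sum_erase _ _ h0, ← Finset.add_sum_erase _ _ h1] at hsum
  have hrest : π ^ (k + e + 1) ∣ ∑ m ∈ ((Finset.range (q + 1)).erase 0).erase 1, a m := by
    refine Finset.dvd_sum fun m hm ↦ ?_
    simp only [Finset.mem_erase, Finset.mem_range] at hm
    exact (pow_add_succ_dvd_choose_mul_pow hq ⟨u, hqu⟩ he hk (by omega) (by omega)).mul_right _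
  have hlin : a 1 + ∑ m ∈ ((Finset.range (q + 1)).erase 0).erase 1, a m = 0 := by
    simpa [a] using hsum
  have hcancel : π ^ (k + e) * π ∣ π ^ (k + e) * (u * N i j) := by
    have ha1 : π ^ (k + e) * (u * N i j) = a 1 := by
      simp only [a, Nat.choose_one_right, hqu, mul_one, pow_one]
      ring
    rw [← pow_succ, ha1, eq_neg_of_add_eq_zero_left hlin, dvd_neg]
    exact hrest
  have hπuN := (mul_dvd_mul_iff_left (pow_ne_zero _ hπ.ne_zero)).1 hcancel
  exact (hπ.dvd_or_dvd hπuN).resolve_left hu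

theorem pow_succ_dvd_sub_one_of_pow_eq_one (hπ : Prime π) {q e : ℕ} {u : R} (hq : q.Prime)
    (hqu : (q : R) = π ^ e * u) (hu : ¬π ∣ u) (he : e + 2 ≤ q) {C : Matrix n n R}
    (hC : C ^ q = 1) (h : ∀ i j, π ∣ (C - 1) i j) (k : ℕ) (i j : n) :
    π ^ (k + 1) ∣ (C - 1) i j := by
  induction k generalizing i j with
  | zero => simpa using h i j
  | succ k ih =>
    choose N hN using ih
    have hCN : C = π ^ (k + 1) • of N + 1 := by
      rw [← sub_eq_iff_eq_add]
      ext i' j'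
      simp [hN]
    rw [hN, pow_succ _ (k + 1)]
    exact mul_dvd_mul_left _
      (prime_dvd_of_smul_add_one_pow_eq_one hπ hq hqu hu he k.succ_pos (hCN ▸ hC) i j)

theorem eq_one_of_pow_eq_one_of_dvd_sub_one [WfDvdMonoid R] (hπ : Prime π) {q e : ℕ} {u : R}
    (hq : q.Prime) (hqu : (q : R) = π ^ e * u) (hu : ¬π ∣ u) (he : e + 2 ≤ q)
    {C : Matrix n n R} (hC : C ^ q = 1) (h : ∀ i j, π ∣ (C - 1) i j) : C = 1 := by
  ext i j
  rw [← sub_eq_zero, ← sub_apply]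
  by_contra hne
  refine FiniteMultiplicity.not_iff_forall.2 (fun k ↦ ?_) (.of_prime_left hπ hne)
  exact (pow_dvd_pow π k.le_succ).trans
    (pow_succ_dvd_sub_one_of_pow_eq_one hπ hq hqu hu he hC h k i j)

end Matrix

namespace GaussianInt

theorem squarefree_natCast_of_prime {q : ℕ} (hq : q.Prime) (hq2 : q ≠ 2) :
    Squarefree (q : GaussianInt) := by
  intro x ⟨c, hc⟩
  have hnorm_dvd : ∀ {y z : GaussianInt}, y ∣ z → y.norm ∣ z.norm :=
    fun h ↦ map_dvd Zsqrtd.normMonoidHom h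
  have hxq : x.norm.natAbs ∣ q := by
    have h : x.norm ^ 2 ∣ (q : ℤ) ^ 2 := ⟨c.norm, by
      rw [sq, sq, ← Zsqrtd.norm_natCast, hc, Zsqrtd.norm_mul, Zsqrtd.norm_mul]⟩
    exact_mod_cast Int.natAbs_dvd_natAbs.2 ((Int.pow_dvd_pow_iff two_ne_zero).1 h)
  rcases hq.eq_one_or_self_of_dvd _ hxq with hunit | hxq
  · exact Zsqrtd.norm_eq_one_iff.1 hunit
  exfalso
  replace hxq : x.norm = q := by rw [← abs_natCast_norm, hxq]
  have hx0 : x ≠ 0 := by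
    rintro rfl
    simp only [mul_zero, zero_mul, Nat.cast_eq_zero] at hc
    exact hq.ne_zero hc
  have hstar : x ∣ star x := by
    refine ⟨c, mul_left_cancel₀ hx0 ?_⟩
    rw [← Zsqrtd.norm_eq_mul_conj, hxq, ← mul_assoc]
    exact_mod_cast hc
  have hodd : ∀ r : ℤ, (q : ℤ) ∣ (2 * r) ^ 2 → (q : ℤ) ∣ r := fun r h ↦
    (Int.Prime.dvd_mul' hq (Int.Prime.dvd_pow' hq h)).resolve_left fun h2 ↦
      hq2 ((Nat.prime_dvd_prime_iff_eq hq Nat.prime_two).1 (by exact_mod_cast h2))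
  have hre : (q : ℤ) ∣ x.re := hodd _ <| by
    rw [← hxq, show (2 * x.re) ^ 2 = (x + star x).norm by simp [Zsqrtd.norm_def]; ring]
    exact hnorm_dvd (dvd_add dvd_rfl hstar)
  have him : (q : ℤ) ∣ x.im := hodd _ <| by
    rw [← hxq, show (2 * x.im) ^ 2 = (x - star x).norm by simp [Zsqrtd.norm_def]; ring]
    exact hnorm_dvd (dvd_sub dvd_rfl hstar)
  have hsq : (q : ℤ) * q ∣ q := by
    calc (q : ℤ) * q ∣ x.re * x.re + x.im * x.im :=
          dvd_add (mul_dvd_mul hre hre) (mul_dvd_mul him him)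
      _ = q := by rw [← hxq, Zsqrtd.norm_def]; ring
  have := Int.le_of_dvd (by exact_mod_cast hq.pos) hsq
  have := hq.two_le
  nlinarith

theorem exists_natCast_eq_pow_mul {π : GaussianInt} (hπ : Prime π)
    (hchar : ringChar (GaussianInt ⧸ Ideal.span {π}) ≠ 2) {q : ℕ} (hq : q.Prime) :
    ∃ e u, (q : GaussianInt) = π ^ e * u ∧ ¬π ∣ u ∧ e + 2 ≤ q := by
  by_cases hπq : π ∣ (q : GaussianInt)
  · obtain ⟨u, hu⟩ := hπq
    have hq2 : q ≠ 2 := by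
      have := (Ideal.span_singleton_prime hπ.ne_zero).2 hπ
      have hdvd : ringChar (GaussianInt ⧸ Ideal.span {π}) ∣ q := by
        refine ringChar.dvd ?_
        rw [← map_natCast (Ideal.Quotient.mk _), Ideal.Quotient.eq_zero_iff_mem,
          Ideal.mem_span_singleton, hu]
        exact dvd_mul_right _ _
      rwa [(hq.eq_one_or_self_of_dvd _ hdvd).resolve_left CharP.ringChar_ne_one] at hchar
    refine ⟨1, u, by rw [pow_one, hu], fun ⟨v, hv⟩ ↦ hπ.not_isUnit ?_, ?_⟩
    · exact squarefree_natCast_of_prime hq hq2 π ⟨v, by rw [hu, hv, mul_assoc]⟩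
    · have := hq.two_le
      omega
  · exact ⟨0, q, by simp, hπq, hq.two_le⟩

theorem matrix_eq_one_of_pow_eq_one {n : Type*} [Fintype n] [DecidableEq n]
    {I : Ideal GaussianInt} [I.IsPrime] (hchar : ringChar (GaussianInt ⧸ I) ≠ 2) {q : ℕ}
    (hq : q.Prime) {C : Matrix n n GaussianInt} (hC : C ^ q = 1)
    (hCI : ∀ i j, (C - 1) i j ∈ I) : C = 1 := by
  rcases eq_or_ne I ⊥ with rfl | hI
  · exact Matrix.ext fun i j ↦ sub_eq_zero.1 (by simpa using hCI i j)
  have hπ := Submodule.IsPrincipal.prime_generator_of_isPrime I hI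
  rw [← Ideal.span_singleton_generator I] at hchar hCI
  obtain ⟨e, u, hqu, hu, he⟩ := exists_natCast_eq_pow_mul hπ hchar hq
  exact Matrix.eq_one_of_pow_eq_one_of_dvd_sub_one hπ hq hqu hu he hC
    fun i j ↦ Ideal.mem_span_singleton.1 (hCI i j)

end GaussianInt

/-- Let `I` be a prime ideal of `ℤ[i]` with `char(ℤ[i]/I) ≠ 2`. If `A ∈ SL₂(ℤ[i])` has
finite order and every entry of `A - 1` lies in `I`, then `A = 1`. -/
theorem eq_one_of_isOfFinOrder_of_sub_one_mem (I : Ideal GaussianInt) (hI : I.IsPrime)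
    (hchar : ringChar (GaussianInt ⧸ I) ≠ 2)
    (A : Matrix.SpecialLinearGroup (Fin 2) GaussianInt) (hA : IsOfFinOrder A)
    (hmem : ∀ i j : Fin 2, ((A : Matrix (Fin 2) (Fin 2) GaussianInt) - 1) i j ∈ I) :
    A = 1 := by
  have hpow : ∀ m : ℕ, ∀ i j, (((A ^ m : SL(2, GaussianInt)) :
      Matrix (Fin 2) (Fin 2) GaussianInt) - 1) i j ∈ I := fun m ↦ by
    rw [← Ideal.mem_matrix, Matrix.SpecialLinearGroup.coe_pow, ← geom_sum_mul]
    exact Ideal.mul_mem_left _ _ ((I.mem_matrix _ _).2 hmem)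
  by_contra hA1
  set q := (orderOf A).minFac
  have hq : q.Prime := Nat.minFac_prime (mt orderOf_eq_one_iff.1 hA1)
  obtain ⟨B, hBq, hBI⟩ : ∃ B : SL(2, GaussianInt), orderOf B = q ∧
      ∀ i j, ((B : Matrix (Fin 2) (Fin 2) GaussianInt) - 1) i j ∈ I :=
    ⟨_, orderOf_pow_orderOf_div hA.orderOf_pos.ne' (Nat.minFac_dvd _), hpow _⟩
  have hB : B = 1 := by
    refine Subtype.ext (GaussianInt.matrix_eq_one_of_pow_eq_one hchar hq ?_ hBI)
    rw [← Matrix.SpecialLinearGroup.coe_pow, ← hBq, pow_orderOf_eq_one,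
      Matrix.SpecialLinearGroup.coe_one]
  exact hq.ne_one (hBq ▸ orderOf_eq_one_iff.2 hB)
end

section
/- Let I be a prime ideal of the Gaussian integers ℤ[i] whose quotient ring ℤ[i]/I is a finite field of odd cardinality q. Then the kernel Γ₀(I) of the induced homomorphism PSL₂(ℤ[i]) → PSL₂(ℤ[i]/I) has index q(q² − 1)/2 in PSL₂(ℤ[i]). -/
/-!
Reduction `PSL₂(ℤ[i]) → PSL₂(ℤ[i]/I)` is surjective: over a field `SL₂` is generated by
transvections, and a transvection lifts to one over `ℤ[i]`. Hence the index of the kernel is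
`|PSL₂(𝔽_q)| = |SL₂(𝔽_q)| / |{±1}|`, where `|SL₂(𝔽_q)| = |GL₂(𝔽_q)| / (q - 1) = q(q² - 1)` and
`1 ≠ -1` because `q` is odd.
-/

open Matrix MatrixGroups

/-- The homomorphism `PSL₂(R) → PSL₂(S)` induced entrywise by a ring homomorphism
`f : R →+* S`: the entrywise map `SL₂(R) → SL₂(S)` sends the center into the center,
hence descends to the quotients. -/
def pslMap {R S : Type*} [CommRing R] [CommRing S] (f : R →+* S) :
    Matrix.ProjectiveSpecialLinearGroup (Fin 2) R →*
      Matrix.ProjectiveSpecialLinearGroup (Fin 2) S :=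
  QuotientGroup.map _ _ (Matrix.SpecialLinearGroup.map f) (by
    intro A hA
    rw [Subgroup.mem_comap]
    obtain ⟨r, hr, hrA⟩ := Matrix.SpecialLinearGroup.mem_center_iff.mp hA
    refine Matrix.SpecialLinearGroup.mem_center_iff.mpr ⟨f r, ?_, ?_⟩
    · rw [← map_pow f, hr, f.map_one]
    · have : ((Matrix.SpecialLinearGroup.map f) A : Matrix (Fin 2) (Fin 2) S)
        = (A : Matrix (Fin 2) (Fin 2) R).map f := rfl
      rw [this, ← hrA]
      ext i j
      by_cases h : i = j <;>
        simp [Matrix.scalar, Matrix.map_apply, Matrix.one_apply, h])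

namespace Matrix.SpecialLinearGroup

variable {n : Type*} [Fintype n] [DecidableEq n]

lemma map_transvection {R S : Type*} [CommRing R] [CommRing S] (f : R →+* S) {i j : n}
    (hij : i ≠ j) (c : R) : map f (transvection hij c) = transvection hij (f c) := by
  ext a b
  simp [transvection_coe, Matrix.single, one_apply, apply_ite f]

lemma map_surjective_of_surjective_fin_two {R F : Type*} [CommRing R] [Field F] {f : R →+* F}
    (hf : Function.Surjective f) : Function.Surjective (map (n := Fin 2) f) := fun A ↦
  SL2.transvection_induction (· ∈ (map f).range)
    (fun _ _ hij c ↦ (hf c).elim fun c' hc' ↦ ⟨transvection hij c', by rw [map_transvection, hc']⟩)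
    (fun _ _ ↦ mul_mem) A

lemma card_GL_eq_card_mul_card_units (R : Type*) [CommRing R] [Nonempty n] :
    Nat.card (GL n R) = Nat.card (SpecialLinearGroup n R) * Nat.card Rˣ := by
  have card_ker_det : Nat.card (GeneralLinearGroup.det (n := n) (R := R)).ker =
      Nat.card (SpecialLinearGroup n R) :=
    Nat.card_congr
      { toFun A := ⟨A.1, Units.ext_iff.mp A.2⟩
        invFun A := ⟨toGL A, Units.ext A.2⟩
        left_inv _ := Subtype.ext (Units.ext rfl)
        right_inv _ := rfl }
  rw [← (GeneralLinearGroup.det).ker.card_mul_index, card_ker_det, Subgroup.index_ker,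
    MonoidHom.range_eq_top.mpr GeneralLinearGroup.det_surjective, Subgroup.card_top]

lemma card_fin_two (F : Type*) [Field F] [Fintype F] :
    Nat.card SL(2, F) = Fintype.card F * (Fintype.card F ^ 2 - 1) := by
  set q := Fintype.card F
  have hq : 0 < q - 1 := Nat.sub_pos_of_lt Fintype.one_lt_card
  have h := card_GL_eq_card_mul_card_units (n := Fin 2) F
  rw [card_GL_field, Fin.prod_univ_two, Nat.card_units, Nat.card_eq_fintype_card (α := F)] at h
  simp only [Fin.coe_ofNat_eq_mod, Nat.zero_mod, Nat.one_mod, pow_zero, pow_one] at h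
  refine Nat.eq_of_mul_eq_mul_right hq (h.symm.trans ?_)
  rw [sq q, ← Nat.mul_sub_one, ← sq]
  ring

lemma card_center_eq_card_rootsOfUnity (R : Type*) [CommRing R] [Nonempty n] :
    Nat.card (Subgroup.center (SpecialLinearGroup n R)) =
      Nat.card (rootsOfUnity (Fintype.card n) R) :=
  Nat.card_congr (center_equiv_rootsOfUnity' (Classical.arbitrary n)).toEquiv

end Matrix.SpecialLinearGroup

namespace Matrix.ProjectiveSpecialLinearGroup

lemma card_mul_card_rootsOfUnity (n : Type*) [Fintype n] [DecidableEq n] [Nonempty n]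
    (R : Type*) [CommRing R] :
    Nat.card (ProjectiveSpecialLinearGroup n R) * Nat.card (rootsOfUnity (Fintype.card n) R) =
      Nat.card (SpecialLinearGroup n R) := by
  rw [← SpecialLinearGroup.card_center_eq_card_rootsOfUnity]
  exact (Subgroup.center _).index_mul_card

lemma card_fin_two {F : Type*} [Field F] [Fintype F] (hF : ringChar F ≠ 2) :
    Nat.card (ProjectiveSpecialLinearGroup (Fin 2) F) =
      Fintype.card F * (Fintype.card F ^ 2 - 1) / 2 := by
  have := ringChar.charP F
  have card_rootsOfUnity_two : Nat.card (rootsOfUnity 2 F) = 2 :=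
    (IsPrimitiveRoot.neg_one (ringChar F) hF).card_rootsOfUnity
  rw [← SpecialLinearGroup.card_fin_two, ← card_mul_card_rootsOfUnity, Fintype.card_fin,
    card_rootsOfUnity_two, Nat.mul_div_cancel _ two_pos]

end Matrix.ProjectiveSpecialLinearGroup

lemma pslMap_surjective {R S : Type*} [CommRing R] [CommRing S] {f : R →+* S}
    (hf : Function.Surjective (SpecialLinearGroup.map (n := Fin 2) f)) :
    Function.Surjective (pslMap f) :=
  QuotientGroup.map_surjective_of_surjective _ _ _ ((QuotientGroup.mk'_surjective _).comp hf) _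

theorem gamma0_index_general (I : Ideal GaussianInt)
    [Fintype (GaussianInt ⧸ I)] (hfield : IsField (GaussianInt ⧸ I))
    (q : ℕ) (hq : Fintype.card (GaussianInt ⧸ I) = q) (hodd : Odd q) :
    (pslMap (Ideal.Quotient.mk I)).ker.index = q * (q ^ 2 - 1) / 2 := by
  let := hfield.toField
  have hchar : ringChar (GaussianInt ⧸ I) ≠ 2 := by
    rwa [Ne, FiniteField.even_card_iff_char_two, hq, ← Nat.even_iff,
      Nat.not_even_iff_odd]
  have hsurj := pslMap_surjective
    (SpecialLinearGroup.map_surjective_of_surjective_fin_two (f := Ideal.Quotient.mk I)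
      Ideal.Quotient.mk_surjective)
  rw [Subgroup.index_ker, MonoidHom.range_eq_top.mpr hsurj, Subgroup.card_top,
    ProjectiveSpecialLinearGroup.card_fin_two hchar, hq]

/-- Let `I` be a prime ideal of `ℤ[i]` whose quotient is a finite field of odd
cardinality `q`. Then the kernel `Γ₀(I)` of the induced homomorphism
`PSL₂(ℤ[i]) → PSL₂(ℤ[i]/I)` has index `q(q² - 1)/2`. -/
theorem gamma0_index (I : Ideal GaussianInt) (hI : I.IsPrime)
    [Fintype (GaussianInt ⧸ I)] (hfield : IsField (GaussianInt ⧸ I))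
    (q : ℕ) (hq : Fintype.card (GaussianInt ⧸ I) = q) (hodd : Odd q) :
    (pslMap (Ideal.Quotient.mk I)).ker.index = q * (q ^ 2 - 1) / 2 :=
  gamma0_index_general I hfield q hq hodd
end
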